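/- For the three orthogonal spin-1/2 components X, Y, Z on ℂ² (associated with σ₁, σ₂, σ₃), the tri-observable M₀(x,y,z) = (1/8)[I + (1/√3)(xσ₁ + yσ₂ + zσ₃)] is a POVM on {−1,+1}³ with marginals M₀[i](w) = (1/2)(I + (w/√3)σ_i), and its error function at the eigenstate ρ_e = (1/2)(I + σ₃) equals log₂(3−√3). -/

import Mathlib

open scoped BigOperators Classical ComplexOrder

/-- The first Pauli matrix. -/
def pauli1 : Matrix (Fin 2) (Fin 2) ℂ := !![0, 1; 1, 0]
/-- The second Pauli matrix. -/
def pauli2 : Matrix (Fin 2) (Fin 2) ℂ := !![0, -Complex.I; Complex.I, 0]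
/-- The third Pauli matrix. -/
def pauli3 : Matrix (Fin 2) (Fin 2) ℂ := !![1, 0; 0, -1]

/-- The outcomes `+1, −1` encoded by booleans. -/
def sg (b : Bool) : ℝ := if b then 1 else -1

/-- Relative entropy (base 2) of discrete densities, `⊤` if `supp p ⊄ supp q`. -/
noncomputable def relEnt {X : Type*} [Fintype X] (p q : X → ℝ) : EReal :=
  if ∀ x, 0 < p x → 0 < q x then
    ((∑ x, if 0 < p x then p x * Real.logb 2 (p x / q x) else 0 : ℝ) : EReal)
  else ⊤

/-- Outcome probability density of the observable `A` in the state `ρ`. -/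
noncomputable def probOf {X : Type*} [Fintype X]
    (A : X → Matrix (Fin 2) (Fin 2) ℂ) (ρ : Matrix (Fin 2) (Fin 2) ℂ) :
    X → ℝ := fun x => ((ρ * A x).trace).re

/-!
Every effect of `M₀` is `(1/8)(1 + A)` with `A = (n·σ)` for a unit Bloch vector `n`, so `A² = 1` and
`1 + A = ½ (1 + A)ᴴ (1 + A)` is positive. Summing out two outcomes cancels their Pauli terms because
`sg true + sg false = 0`. In `ρ_e` the effect `½(1 + c σᵢ)` has probability `(1 + c ⟨σᵢ⟩)/2` with
`⟨σ₁⟩ = ⟨σ₂⟩ = 0` and `⟨σ₃⟩ = 1`: the `X` and `Y` terms compare two uniform laws and vanish, while `Z` is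
the point mass at `+1`, contributing `log₂ (1/q(+1))` with `q(+1) = (1 + 1/√3)/2`, i.e. `log₂ (3 − √3)`.
-/

open Matrix

@[simp] theorem sg_true : sg true = 1 := rfl

@[simp] theorem sg_false : sg false = -1 := rfl

theorem sg_mul_self (b : Bool) : sg b * sg b = 1 := by cases b <;> norm_num [sg]

theorem Matrix.PosSemidef.one_add_of_mul_self_eq_one {n 𝕜 : Type*} [Fintype n] [DecidableEq n]
    [RCLike 𝕜] {A : Matrix n n 𝕜} (hA : A.IsHermitian) (hAA : A * A = 1) :
    (1 + A).PosSemidef := by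
  have hsq : (1 + A)ᴴ * (1 + A) = (2 : ℝ) • (1 + A) := by
    rw [(isHermitian_one.add hA).eq, add_mul, mul_add, mul_add, hAA, one_mul, mul_one, one_mul]
    module
  have h : 1 + A = (1 / 2 : ℝ) • ((1 + A)ᴴ * (1 + A)) := by
    rw [hsq, smul_smul]; norm_num
  rw [h]
  exact (posSemidef_conjTranspose_mul_self _).smul (by norm_num)

theorem pauli_combination_mul_self (a b c : ℝ) :
    (a • pauli1 + b • pauli2 + c • pauli3) * (a • pauli1 + b • pauli2 + c • pauli3) =
      (a ^ 2 + b ^ 2 + c ^ 2) • (1 : Matrix (Fin 2) (Fin 2) ℂ) := by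
  ext i j
  fin_cases i <;> fin_cases j <;>
    simp [pauli1, pauli2, pauli3, mul_apply, Fin.sum_univ_two, Complex.ext_iff, sq]
    <;> (try constructor) <;> ring

theorem isHermitian_pauli_combination (a b c : ℝ) :
    (a • pauli1 + b • pauli2 + c • pauli3).IsHermitian := by
  ext i j
  fin_cases i <;> fin_cases j <;> simp [pauli1, pauli2, pauli3]

noncomputable def triObs (b₁ b₂ b₃ : Bool) : Matrix (Fin 2) (Fin 2) ℂ :=
  ((1 : ℝ)/8) • ((1 : Matrix (Fin 2) (Fin 2) ℂ) +
    (Real.sqrt 3)⁻¹ • (sg b₁ • pauli1 + sg b₂ • pauli2 + sg b₃ • pauli3))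

theorem triObs_posSemidef (b₁ b₂ b₃ : Bool) : (triObs b₁ b₂ b₃).PosSemidef := by
  set S := sg b₁ • pauli1 + sg b₂ • pauli2 + sg b₃ • pauli3
  have hS : ((Real.sqrt 3)⁻¹ • S) * ((Real.sqrt 3)⁻¹ • S) = 1 := by
    have h3 : (Real.sqrt 3)⁻¹ * (Real.sqrt 3)⁻¹ * (sg b₁ ^ 2 + sg b₂ ^ 2 + sg b₃ ^ 2) = 1 := by
      simp only [sq, sg_mul_self, ← mul_inv, Real.mul_self_sqrt (by norm_num : (0 : ℝ) ≤ 3)]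
      norm_num
    rw [smul_mul_smul_comm, pauli_combination_mul_self, smul_smul, h3, one_smul]
  exact (PosSemidef.one_add_of_mul_self_eq_one
    ((isHermitian_pauli_combination _ _ _).smul (.all _)) hS).smul (by norm_num)

theorem sum_triObs : ∑ b₁, ∑ b₂, ∑ b₃, triObs b₁ b₂ b₃ = 1 := by
  simp only [Fintype.sum_bool, triObs, sg_true, sg_false]
  module

theorem sum_triObs_fst (b₁ : Bool) : ∑ b₂, ∑ b₃, triObs b₁ b₂ b₃ =
    ((1 : ℝ)/2) • ((1 : Matrix (Fin 2) (Fin 2) ℂ) + (sg b₁ / Real.sqrt 3) • pauli1) := by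
  simp only [Fintype.sum_bool, triObs, sg_true, sg_false, div_eq_mul_inv]
  module

theorem sum_triObs_snd (b₂ : Bool) : ∑ b₁, ∑ b₃, triObs b₁ b₂ b₃ =
    ((1 : ℝ)/2) • ((1 : Matrix (Fin 2) (Fin 2) ℂ) + (sg b₂ / Real.sqrt 3) • pauli2) := by
  simp only [Fintype.sum_bool, triObs, sg_true, sg_false, div_eq_mul_inv]
  module

theorem sum_triObs_thd (b₃ : Bool) : ∑ b₁, ∑ b₂, triObs b₁ b₂ b₃ =
    ((1 : ℝ)/2) • ((1 : Matrix (Fin 2) (Fin 2) ℂ) + (sg b₃ / Real.sqrt 3) • pauli3) := by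
  simp only [Fintype.sum_bool, triObs, sg_true, sg_false, div_eq_mul_inv]
  module

theorem probOf_half_one_add_smul {X : Type*} [Fintype X] {ρ : Matrix (Fin 2) (Fin 2) ℂ}
    (hρ : ρ.trace = 1) (f : X → ℝ) (σ : Matrix (Fin 2) (Fin 2) ℂ) :
    probOf (fun x => ((1 : ℝ)/2) • ((1 : Matrix (Fin 2) (Fin 2) ℂ) + f x • σ)) ρ =
      fun x => (1 + f x * (ρ * σ).trace.re) / 2 := by
  ext x
  simp [probOf, mul_add, trace_add, hρ]
  ring

theorem trace_spinUp : (((1 : ℝ)/2) • ((1 : Matrix (Fin 2) (Fin 2) ℂ) + pauli3)).trace = 1 := by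
  simp [trace_fin_two, pauli3]

theorem re_trace_spinUp_mul_pauli1 :
    ((((1 : ℝ)/2) • ((1 : Matrix (Fin 2) (Fin 2) ℂ) + pauli3)) * pauli1).trace.re = 0 := by
  simp [trace_fin_two, mul_apply, pauli1, pauli3]

theorem re_trace_spinUp_mul_pauli2 :
    ((((1 : ℝ)/2) • ((1 : Matrix (Fin 2) (Fin 2) ℂ) + pauli3)) * pauli2).trace.re = 0 := by
  simp [trace_fin_two, mul_apply, pauli2, pauli3]

theorem re_trace_spinUp_mul_pauli3 :
    ((((1 : ℝ)/2) • ((1 : Matrix (Fin 2) (Fin 2) ℂ) + pauli3)) * pauli3).trace.re = 1 := by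
  simp [trace_fin_two, mul_apply, pauli3]; norm_num

theorem relEnt_self {X : Type*} [Fintype X] (p : X → ℝ) : relEnt p p = ((0 : ℝ) : EReal) := by
  rw [relEnt, if_pos fun _ h => h]
  congr 1
  refine Finset.sum_eq_zero fun x _ => ?_
  split_ifs with h
  · rw [div_self h.ne', Real.logb_one, mul_zero]
  · rfl

theorem relEnt_eq_logb_inv_of_dirac {X : Type*} [Fintype X] {p q : X → ℝ} {x₀ : X}
    (hp₀ : p x₀ = 1) (hp : ∀ x ≠ x₀, p x = 0) (hq : 0 < q x₀) :
    relEnt p q = ((Real.logb 2 (q x₀)⁻¹ : ℝ) : EReal) := by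
  have hsupp : ∀ x, 0 < p x → x = x₀ := fun x hx => by
    by_contra hne; exact hx.ne' (hp x hne)
  rw [relEnt, if_pos fun x hx => hsupp x hx ▸ hq, Finset.sum_eq_single x₀
    (fun x _ hne => if_neg fun hx => hne (hsupp x hx)) (by simp), if_pos (by rw [hp₀]; norm_num),
    hp₀, one_mul, one_div]
theorem inv_half_one_add_inv_sqrt_three : ((1 + 1 / Real.sqrt 3) / 2)⁻¹ = 3 - Real.sqrt 3 := by
  have h3 : Real.sqrt 3 * Real.sqrt 3 = 3 := Real.mul_self_sqrt (by norm_num)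
  have hpos : 0 < Real.sqrt 3 := by positivity
  field_simp
  nlinarith

/-- For three orthogonal spin-1/2 components `X, Y, Z`, the tri-observable
`M₀(x,y,z) = (1/8)[I + (1/√3)(xσ₁ + yσ₂ + zσ₃)]` is a POVM on `{−1,+1}³` with
marginals `M₀[i](w) = (1/2)(I + (w/√3)σᵢ)`, and its error function at the
eigenstate `ρ_e = (1/2)(I + σ₃)` equals `log₂(3−√3)`. -/
theorem stmt19
    (Xo Yo Zo : Bool → Matrix (Fin 2) (Fin 2) ℂ)
    (hX : ∀ b, Xo b = ((1 : ℝ)/2) • ((1 : Matrix (Fin 2) (Fin 2) ℂ) + sg b • pauli1))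
    (hY : ∀ b, Yo b = ((1 : ℝ)/2) • ((1 : Matrix (Fin 2) (Fin 2) ℂ) + sg b • pauli2))
    (hZ : ∀ b, Zo b = ((1 : ℝ)/2) • ((1 : Matrix (Fin 2) (Fin 2) ℂ) + sg b • pauli3))
    (M₀ : Bool → Bool → Bool → Matrix (Fin 2) (Fin 2) ℂ)
    (hM₀ : ∀ b₁ b₂ b₃, M₀ b₁ b₂ b₃ =
      ((1 : ℝ)/8) •
        ((1 : Matrix (Fin 2) (Fin 2) ℂ) +
          (Real.sqrt 3)⁻¹ • (sg b₁ • pauli1 + sg b₂ • pauli2 + sg b₃ • pauli3)))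
    (ρe : Matrix (Fin 2) (Fin 2) ℂ)
    (hρe : ρe = ((1 : ℝ)/2) • ((1 : Matrix (Fin 2) (Fin 2) ℂ) + pauli3)) :
    (∀ b₁ b₂ b₃, (M₀ b₁ b₂ b₃).PosSemidef) ∧
      (∑ b₁ : Bool, ∑ b₂ : Bool, ∑ b₃ : Bool, M₀ b₁ b₂ b₃) = 1 ∧
      (∀ b₁, ∑ b₂ : Bool, ∑ b₃ : Bool, M₀ b₁ b₂ b₃ =
        ((1 : ℝ)/2) •
          ((1 : Matrix (Fin 2) (Fin 2) ℂ) + (sg b₁ / Real.sqrt 3) • pauli1)) ∧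
      (∀ b₂, ∑ b₁ : Bool, ∑ b₃ : Bool, M₀ b₁ b₂ b₃ =
        ((1 : ℝ)/2) •
          ((1 : Matrix (Fin 2) (Fin 2) ℂ) + (sg b₂ / Real.sqrt 3) • pauli2)) ∧
      (∀ b₃, ∑ b₁ : Bool, ∑ b₂ : Bool, M₀ b₁ b₂ b₃ =
        ((1 : ℝ)/2) •
          ((1 : Matrix (Fin 2) (Fin 2) ℂ) + (sg b₃ / Real.sqrt 3) • pauli3)) ∧
      relEnt (probOf Xo ρe) (probOf (fun b₁ => ∑ b₂ : Bool, ∑ b₃ : Bool, M₀ b₁ b₂ b₃) ρe) +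
          relEnt (probOf Yo ρe) (probOf (fun b₂ => ∑ b₁ : Bool, ∑ b₃ : Bool, M₀ b₁ b₂ b₃) ρe) +
          relEnt (probOf Zo ρe) (probOf (fun b₃ => ∑ b₁ : Bool, ∑ b₂ : Bool, M₀ b₁ b₂ b₃) ρe) =
        ((Real.logb 2 (3 - Real.sqrt 3) : ℝ) : EReal) := by
  obtain rfl : M₀ = triObs := funext fun b₁ => funext fun b₂ => funext (hM₀ b₁ b₂)
  obtain rfl : Xo = _ := funext hX
  obtain rfl : Yo = _ := funext hY
  obtain rfl : Zo = _ := funext hZ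
  subst hρe
  refine ⟨triObs_posSemidef, sum_triObs, sum_triObs_fst, sum_triObs_snd, sum_triObs_thd, ?_⟩
  simp only [sum_triObs_fst, sum_triObs_snd, sum_triObs_thd, probOf_half_one_add_smul trace_spinUp,
    re_trace_spinUp_mul_pauli1, re_trace_spinUp_mul_pauli2, re_trace_spinUp_mul_pauli3,
    mul_zero, mul_one, relEnt_self]
  have hZent : relEnt (fun b => (1 + sg b) / 2) (fun b => (1 + sg b / Real.sqrt 3) / 2) =
      ((Real.logb 2 (3 - Real.sqrt 3) : ℝ) : EReal) := by
    rw [relEnt_eq_logb_inv_of_dirac (x₀ := true) (by norm_num) (by simp) (by rw [sg_true]; positivity),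
      sg_true, inv_half_one_add_inv_sqrt_three]
  rw [hZent]
  simp
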